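/- Let λ be an eigenvalue of the Dirichlet problem −y'' + q y = λ w y on [−1,1] with eigenfunction φ, and suppose in addition that w is absolutely continuous on [−1,1] with w' ∈ L²[−1,1]. Then ∫_{−1}^1 w(x)|φ'(x)|² dx + ∫_{−1}^1 w'(x)φ'(x)·conj(φ(x)) dx + ∫_{−1}^1 w(x)q(x)|φ(x)|² dx = λ·∫_{−1}^1 w(x)²|φ(x)|² dx. -/

import Mathlib

open MeasureTheory Set Complex

noncomputable section

/-- `φ` (with derivative `φ'`) is an eigenfunction for the eigenvalue `lam` of the
Dirichlet problem `-y'' + q y = lam ⬝ r ⬝ y` on `[-1,1]`, `y(-1) = y(1) = 0`: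
`φ` is differentiable on `[-1,1]` with derivative `φ'`, the derivative `φ'` is
absolutely continuous with `φ'(x) = φ'(-1) + ∫_{-1}^x (q φ - lam r φ)`,
the boundary conditions hold, and `φ` is not identically zero on `[-1,1]`. -/
def IsEigenpair (q r : ℝ → ℝ) (lam : ℂ) (φ φ' : ℝ → ℂ) : Prop :=
  (∀ x ∈ Icc (-1:ℝ) 1, HasDerivAt φ (φ' x) x) ∧
  (∀ x ∈ Icc (-1:ℝ) 1,
    φ' x = φ' (-1) + ∫ t in (-1:ℝ)..x, ((q t : ℂ) * φ t - lam * (r t : ℂ) * φ t)) ∧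
  φ (-1) = 0 ∧ φ 1 = 0 ∧ ∃ x ∈ Icc (-1:ℝ) 1, φ x ≠ 0

/-- `lam` is an eigenvalue of the Dirichlet problem `-y'' + q y = lam ⬝ r ⬝ y`
on `[-1,1]`. -/
def IsEigenvalue (q r : ℝ → ℝ) (lam : ℂ) : Prop :=
  ∃ φ φ' : ℝ → ℂ, IsEigenpair q r lam φ φ'

/-! Multiplying the equation by `w · conj φ` and integrating amounts to saying that the
derivative of `w φ' conj φ`, which vanishes at `±1`, integrates to zero; expanding that derivative
with `φ'' = q φ - λ w φ` gives the four terms. As `φ''` and `w'` are merely integrable, the product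
rule is proved for indefinite integrals `u = u a + ∫ f`, `v = v a + ∫ g` directly: the product
`(∫ f) (∫ g)` over the square `(a, b]²` splits along the diagonal, and Fubini evaluates the two
triangles as `∫ (∫ f) g` and `∫ f (∫ g)`. -/

section

variable {𝕜 : Type*} [RCLike 𝕜] {a b : ℝ} {f g : ℝ → 𝕜}

theorem integral_primitive_mul_eq_setIntegral_prod (hab : a ≤ b)
    (hf : IntegrableOn f (Ioc a b)) (hg : IntegrableOn g (Ioc a b)) :
    ∫ x in a..b, (∫ t in a..x, f t) * g x =
      ∫ p in {p : ℝ × ℝ | p.1 ≤ p.2}, f p.1 * g p.2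
        ∂(volume.restrict (Ioc a b)).prod (volume.restrict (Ioc a b)) := by
  have hS : MeasurableSet {p : ℝ × ℝ | p.1 ≤ p.2} := measurableSet_le measurable_fst measurable_snd
  rw [← integral_indicator hS, integral_prod_symm _ ((hf.mul_prod hg).indicator hS),
    intervalIntegral.integral_of_le hab]
  refine setIntegral_congr_fun measurableSet_Ioc fun y hy => ?_
  have hslice : (fun x => {p : ℝ × ℝ | p.1 ≤ p.2}.indicator (fun p => f p.1 * g p.2) (x, y))
      = (Iic y).indicator (fun x => f x * g y) := by
    ext x; simp [indicator_apply]
  rw [hslice, integral_indicator measurableSet_Iic, Measure.restrict_restrict measurableSet_Iic,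
    Iic_inter_Ioc_of_le hy.2, integral_mul_const, intervalIntegral.integral_of_le hy.1.le]

theorem integral_mul_primitive_eq_setIntegral_prod (hab : a ≤ b)
    (hf : IntegrableOn f (Ioc a b)) (hg : IntegrableOn g (Ioc a b)) :
    ∫ x in a..b, f x * ∫ t in a..x, g t =
      ∫ p in {p : ℝ × ℝ | p.2 < p.1}, f p.1 * g p.2
        ∂(volume.restrict (Ioc a b)).prod (volume.restrict (Ioc a b)) := by
  have hS : MeasurableSet {p : ℝ × ℝ | p.2 < p.1} := measurableSet_lt measurable_snd measurable_fst
  rw [← integral_indicator hS, integral_prod _ ((hf.mul_prod hg).indicator hS),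
    intervalIntegral.integral_of_le hab]
  refine setIntegral_congr_fun measurableSet_Ioc fun x hx => ?_
  have hslice : (fun y => {p : ℝ × ℝ | p.2 < p.1}.indicator (fun p => f p.1 * g p.2) (x, y))
      = (Iio x).indicator (fun y => f x * g y) := by
    ext y; simp [indicator_apply]
  have hIoo : Iio x ∩ Ioc a b = Ioo a x := by
    ext y
    simp only [mem_inter_iff, mem_Iio, mem_Ioc, mem_Ioo]
    exact ⟨fun ⟨hyx, hay, _⟩ => ⟨hay, hyx⟩, fun ⟨hay, hyx⟩ => ⟨hyx, hay, hyx.le.trans hx.2⟩⟩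
  rw [hslice, integral_indicator measurableSet_Iio, Measure.restrict_restrict measurableSet_Iio,
    hIoo, integral_const_mul, intervalIntegral.integral_of_le hx.1.le, integral_Ioc_eq_integral_Ioo]

theorem integral_primitive_mul_add_mul_primitive (hab : a ≤ b)
    (hf : IntervalIntegrable f volume a b) (hg : IntervalIntegrable g volume a b) :
    ∫ x in a..b, ((∫ t in a..x, f t) * g x + f x * ∫ t in a..x, g t) =
      (∫ x in a..b, f x) * ∫ x in a..b, g x := by
  have hf' := (intervalIntegrable_iff_integrableOn_Ioc_of_le hab).1 hf
  have hg' := (intervalIntegrable_iff_integrableOn_Ioc_of_le hab).1 hg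
  have hF := intervalIntegral.continuousOn_primitive_interval' hf left_mem_uIcc
  have hG := intervalIntegral.continuousOn_primitive_interval' hg left_mem_uIcc
  have hcompl : {p : ℝ × ℝ | p.2 < p.1} = {p | p.1 ≤ p.2}ᶜ := by ext; simp
  rw [intervalIntegral.integral_add (hg.continuousOn_mul hF) (hf.mul_continuousOn hG),
    integral_primitive_mul_eq_setIntegral_prod hab hf' hg',
    integral_mul_primitive_eq_setIntegral_prod hab hf' hg', hcompl,
    integral_add_compl (measurableSet_le measurable_fst measurable_snd) (hf'.mul_prod hg'),
    integral_prod_mul, intervalIntegral.integral_of_le hab, intervalIntegral.integral_of_le hab]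

end

/-- Absolutely continuous functions on `[a, b]` are exactly those of this form; `f` is then
the a.e. derivative of `u`. -/
def IsPrimitiveOn {𝕜 : Type*} [RCLike 𝕜] (u f : ℝ → 𝕜) (a b : ℝ) : Prop :=
  IntervalIntegrable f volume a b ∧ ∀ x ∈ Icc a b, u x = u a + ∫ t in a..x, f t

namespace IsPrimitiveOn

variable {𝕜 : Type*} [RCLike 𝕜] {u v f g : ℝ → 𝕜} {a b : ℝ}

theorem continuousOn (h : IsPrimitiveOn u f a b) : ContinuousOn u (Icc a b) :=
  (continuousOn_const.add (intervalIntegral.continuousOn_primitive_interval' h.1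
    left_mem_uIcc)).mono Icc_subset_uIcc |>.congr h.2

theorem integral_eq_sub (h : IsPrimitiveOn u f a b) (hab : a ≤ b) :
    ∫ x in a..b, f x = u b - u a := by
  rw [h.2 b ⟨hab, le_rfl⟩, add_sub_cancel_left]

theorem ofReal {u f : ℝ → ℝ} (h : IsPrimitiveOn u f a b) :
    IsPrimitiveOn (fun x => (u x : 𝕜)) (fun x => (f x : 𝕜)) a b :=
  ⟨⟨h.1.1.ofReal, h.1.2.ofReal⟩, fun x hx => by
    dsimp only
    rw [RCLike.intervalIntegral_ofReal, h.2 x hx, RCLike.ofReal_add]⟩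

theorem mul (hu : IsPrimitiveOn u f a b) (hv : IsPrimitiveOn v g a b) (hab : a ≤ b) :
    IsPrimitiveOn (u * v) (fun x => u x * g x + f x * v x) a b := by
  have hu' := hu.continuousOn
  have hv' := hv.continuousOn
  rw [← uIcc_of_le hab] at hu' hv'
  refine ⟨(hv.1.continuousOn_mul hu').add (hu.1.mul_continuousOn hv'), fun x hx => ?_⟩
  have hsub : uIcc a x ⊆ uIcc a b := uIcc_subset_uIcc_left (Icc_subset_uIcc hx)
  have hf := hu.1.mono_set hsub
  have hg := hv.1.mono_set hsub
  have hF := intervalIntegral.continuousOn_primitive_interval' hf left_mem_uIcc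
  have hG := intervalIntegral.continuousOn_primitive_interval' hg left_mem_uIcc
  have hexpand : EqOn (fun y => u y * g y + f y * v y)
      (fun y => (u a * g y + f y * v a) + ((∫ t in a..y, f t) * g y + f y * ∫ t in a..y, g t))
      (uIcc a x) := by
    intro y hy
    rw [uIcc_of_le hx.1] at hy
    simp only [hu.2 y ⟨hy.1, hy.2.trans hx.2⟩, hv.2 y ⟨hy.1, hy.2.trans hx.2⟩]
    ring
  rw [intervalIntegral.integral_congr hexpand,
    intervalIntegral.integral_add ((hg.const_mul _).add (hf.mul_const _))
      ((hg.continuousOn_mul hF).add (hf.mul_continuousOn hG)),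
    intervalIntegral.integral_add (hg.const_mul _) (hf.mul_const _),
    integral_primitive_mul_add_mul_primitive hx.1 hf hg, intervalIntegral.integral_const_mul,
    intervalIntegral.integral_mul_const, Pi.mul_apply, Pi.mul_apply, hu.2 x hx, hv.2 x hx]
  ring

end IsPrimitiveOn

theorem isPrimitiveOn_of_hasDerivAt {𝕜 : Type*} [RCLike 𝕜] {u u' : ℝ → 𝕜} {a b : ℝ}
    (hderiv : ∀ x ∈ Icc a b, HasDerivAt u (u' x) x) (hu' : IntervalIntegrable u' volume a b) :
    IsPrimitiveOn u u' a b := by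
  refine ⟨hu', fun x hx => ?_⟩
  rw [intervalIntegral.integral_eq_sub_of_hasDerivAt (fun y hy => hderiv y ?_)
    (hu'.mono_set (uIcc_subset_uIcc_left (Icc_subset_uIcc hx))), add_sub_cancel]
  rw [uIcc_of_le hx.1] at hy
  exact ⟨hy.1, hy.2.trans hx.2⟩

open scoped ComplexConjugate in
theorem integral_deriv_weight_mul_deriv_mul_conj_eq_zero {𝕜 : Type*} [RCLike 𝕜]
    {w w' φ φ' ψ : ℝ → 𝕜} {a b : ℝ} (hab : a ≤ b)
    (hw : IsPrimitiveOn w w' a b) (hφ' : IsPrimitiveOn φ' ψ a b)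
    (hφ : ∀ x ∈ Icc a b, HasDerivAt φ (φ' x) x) (ha : φ a = 0) (hb : φ b = 0) :
    ∫ x in a..b, (w x * (φ' x * conj (φ' x) + ψ x * conj (φ x)) + w' x * (φ' x * conj (φ x)))
      = 0 := by
  have hφc : IsPrimitiveOn (fun x => conj (φ x)) (fun x => conj (φ' x)) a b :=
    isPrimitiveOn_of_hasDerivAt (fun x hx => (hφ x hx).star)
      ((RCLike.continuous_conj.comp_continuousOn hφ'.continuousOn).intervalIntegrable_of_Icc hab)
  simpa [ha, hb] using (hw.mul (hφ'.mul hφc hab) hab).integral_eq_sub hab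

namespace IsEigenpair

variable {q w : ℝ → ℝ} {lam : ℂ} {φ φ' : ℝ → ℂ}

theorem continuousOn (h : IsEigenpair q w lam φ φ') : ContinuousOn φ (Icc (-1) 1) :=
  fun x hx => (h.1 x hx).continuousAt.continuousWithinAt

theorem isPrimitiveOn_deriv (h : IsEigenpair q w lam φ φ')
    (hq : IntervalIntegrable (fun x => (q x : ℂ)) volume (-1) 1)
    (hw : ContinuousOn (fun x => (w x : ℂ)) (Icc (-1) 1)) :
    IsPrimitiveOn φ' (fun t => (q t : ℂ) * φ t - lam * (w t : ℂ) * φ t) (-1) 1 := by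
  have hab : (-1 : ℝ) ≤ 1 := by norm_num
  refine ⟨(hq.mul_continuousOn ?_).sub ?_, h.2.1⟩
  · rw [uIcc_of_le hab]
    exact h.continuousOn
  · exact ((continuousOn_const.mul hw).mul h.continuousOn).intervalIntegrable_of_Icc hab

end IsEigenpair

theorem weighted_energy_identity_general
    (q w w' : ℝ → ℝ)
    (hq : IntegrableOn q (Icc (-1:ℝ) 1))
    (hw'int : IntegrableOn w' (Icc (-1:ℝ) 1))
    (hac : ∀ x ∈ Icc (-1:ℝ) 1, w x = w (-1) + ∫ t in (-1:ℝ)..x, w' t)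
    (lam : ℂ) (φ φ' : ℝ → ℂ) (heig : IsEigenpair q w lam φ φ') :
    (∫ x in (-1:ℝ)..1, (w x : ℂ) * (‖φ' x‖ : ℂ) ^ 2) +
      (∫ x in (-1:ℝ)..1, (w' x : ℂ) * φ' x * (starRingEnd ℂ) (φ x)) +
      (∫ x in (-1:ℝ)..1, (w x : ℂ) * (q x : ℂ) * (‖φ x‖ : ℂ) ^ 2) =
    lam * ∫ x in (-1:ℝ)..1, (w x : ℂ) ^ 2 * (‖φ x‖ : ℂ) ^ 2 := by
  have hab : (-1 : ℝ) ≤ 1 := by norm_num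
  have hI : uIcc (-1 : ℝ) 1 = Icc (-1) 1 := uIcc_of_le hab
  have hqI : IntervalIntegrable (fun x => (q x : ℂ)) volume (-1) 1 :=
    (intervalIntegrable_iff_integrableOn_Icc_of_le hab).2 hq.ofReal
  have hwP : IsPrimitiveOn (fun x => (w x : ℂ)) (fun x => (w' x : ℂ)) (-1) 1 :=
    IsPrimitiveOn.ofReal ⟨(intervalIntegrable_iff_integrableOn_Icc_of_le hab).2 hw'int, hac⟩
  have hwc := hwP.continuousOn
  have hφc := heig.continuousOn
  have hφ'P := heig.isPrimitiveOn_deriv hqI hwc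
  have hφ'c := hφ'P.continuousOn
  have hT1 : IntervalIntegrable (fun x => (w x : ℂ) * (‖φ' x‖ : ℂ) ^ 2) volume (-1) 1 :=
    ContinuousOn.intervalIntegrable_of_Icc hab (by fun_prop)
  have hT2 : IntervalIntegrable (fun x => (w' x : ℂ) * φ' x * starRingEnd ℂ (φ x)) volume (-1) 1 :=
    (hwP.1.mul_continuousOn (hI ▸ hφ'c)).mul_continuousOn (by rw [hI]; fun_prop)
  have hT3 : IntervalIntegrable (fun x => (w x : ℂ) * (q x : ℂ) * (‖φ x‖ : ℂ) ^ 2) volume (-1) 1 :=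
    (hqI.continuousOn_mul (hI ▸ hwc)).mul_continuousOn (by rw [hI]; fun_prop)
  have hT4 : IntervalIntegrable (fun x => (w x : ℂ) ^ 2 * (‖φ x‖ : ℂ) ^ 2) volume (-1) 1 :=
    ContinuousOn.intervalIntegrable_of_Icc hab (by fun_prop)
  rw [← sub_eq_zero, ← intervalIntegral.integral_add hT1 hT2, ← intervalIntegral.integral_add
    (hT1.add hT2) hT3, ← intervalIntegral.integral_const_mul, ← intervalIntegral.integral_sub
    ((hT1.add hT2).add hT3) (hT4.const_mul lam), ← integral_deriv_weight_mul_deriv_mul_conj_eq_zero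
      hab hwP hφ'P heig.1 heig.2.2.1 heig.2.2.2.1]
  refine intervalIntegral.integral_congr fun x _ => ?_
  simp only [← mul_conj']
  ring

/-- the identity obtained by multiplying the equation by `w ⬝ conj φ`
and integrating by parts, when `w` is absolutely continuous with `w' ∈ L²`. -/
theorem weighted_energy_identity
    (q w w' : ℝ → ℝ)
    (hq : IntegrableOn q (Icc (-1:ℝ) 1))
    (hw : IntegrableOn w (Icc (-1:ℝ) 1))
    (hw0 : ∀ᵐ x ∂(volume.restrict (Icc (-1:ℝ) 1)), w x ≠ 0)
    (hsign : 0 < volume {x ∈ Icc (-1:ℝ) 1 | 0 < w x} ∧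
             0 < volume {x ∈ Icc (-1:ℝ) 1 | w x < 0})
    (hw'int : IntegrableOn w' (Icc (-1:ℝ) 1))
    (hw'sq : IntegrableOn (fun x => (w' x) ^ 2) (Icc (-1:ℝ) 1))
    (hac : ∀ x ∈ Icc (-1:ℝ) 1, w x = w (-1) + ∫ t in (-1:ℝ)..x, w' t)
    (lam : ℂ) (φ φ' : ℝ → ℂ) (heig : IsEigenpair q w lam φ φ') :
    (∫ x in (-1:ℝ)..1, (w x : ℂ) * (‖φ' x‖ : ℂ) ^ 2) +
      (∫ x in (-1:ℝ)..1, (w' x : ℂ) * φ' x * (starRingEnd ℂ) (φ x)) +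
      (∫ x in (-1:ℝ)..1, (w x : ℂ) * (q x : ℂ) * (‖φ x‖ : ℂ) ^ 2) =
    lam * ∫ x in (-1:ℝ)..1, (w x : ℂ) ^ 2 * (‖φ x‖ : ℂ) ^ 2 :=
  weighted_energy_identity_general q w w' hq hw'int hac lam φ φ' heig
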